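/- Let R be an integrally closed Noetherian domain. Then R equals the intersection, inside its fraction field, of the localizations R_p over all height-one prime ideals p of R. -/

import Mathlib

/-!
Write `x = a / b`. If `b ∤ a`, the colon ideal `(b) : a` is proper, hence contained in an
associated prime `P = (b) : a'` of `R ⧸ (b)`. The element `a' / b ∉ R` maps `P` into `R`, but
not into `P`: otherwise it would be integral over `R` (as `P` is finitely generated), hence in
`R`. So `a' t₀ = b u` for some `t₀ ∈ P` and `u ∉ P`, and then `t₀` generates `P R_P`.
A Noetherian local domain with principal maximal ideal is a DVR or a field, so `P` has height
one; yet every `s` with `s x ∈ R` lies in `(b) : a ⊆ P`.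
-/

open IsLocalRing

theorem Ideal.Quotient.mem_colon_bot_mk_iff_dvd {R : Type*} [CommRing R] {a b t : R} :
    t ∈ (⊥ : Submodule R (R ⧸ Ideal.span {b})).colon {Ideal.Quotient.mk _ a} ↔
      b ∣ t * a := by
  rw [Submodule.mem_colon_singleton, Submodule.mem_bot, ← Ideal.Quotient.eq_zero_iff_dvd]
  rfl

section

variable {R : Type*} [CommRing R] [IsDomain R]

theorem IsFractionRing.exists_div_mul_eq_iff_dvd {K : Type*} [Field K] [Algebra R K]
    [IsFractionRing R K] {a b s : R} (hb : b ≠ 0) :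
    (∃ c, algebraMap R K a / algebraMap R K b * algebraMap R K s = algebraMap R K c) ↔
      b ∣ s * a := by
  have hb' : algebraMap R K b ≠ 0 := IsFractionRing.to_map_ne_zero_of_mem_nonZeroDivisors
    (mem_nonZeroDivisors_of_ne_zero hb)
  simp only [div_mul_eq_mul_div, div_eq_iff hb', ← map_mul,
    (IsFractionRing.injective R K).eq_iff, mul_comm a s, eq_comm (a := s * a), Dvd.dvd]
  exact exists_congr fun c => by rw [mul_comm c b]

theorem exists_mul_eq_mul_notMem_of_forall_mem_iff_dvd [IsNoetherianRing R]
    [IsIntegrallyClosed R] {P : Ideal R} [P.IsPrime] {a b : R} (hb : b ≠ 0)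
    (hP : ∀ t, t ∈ P ↔ b ∣ t * a) : ∃ t ∈ P, ∃ u ∉ P, t * a = b * u := by
  by_contra! hstable
  let K := FractionRing R
  let z : K := algebraMap R K a / algebraMap R K b
  have hb' : algebraMap R K b ≠ 0 := IsFractionRing.to_map_ne_zero_of_mem_nonZeroDivisors
    (mem_nonZeroDivisors_of_ne_zero hb)
  have hz {t u : R} (h : t * a = b * u) : z * algebraMap R K t = algebraMap R K u := by
    rw [div_mul_eq_mul_div, div_eq_iff hb', ← map_mul, ← map_mul, mul_comm a, h, mul_comm]
  let N : Submodule R K := Submodule.map (Algebra.linearMap R K) P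
  have hN : N ≠ ⊥ := (Submodule.ne_bot_iff N).mpr
    ⟨_, ⟨b, (hP b).mpr (dvd_mul_right b a), rfl⟩, hb'⟩
  have hzN : ∀ n ∈ N, z • n ∈ N := by
    rintro _ ⟨t, ht, rfl⟩
    obtain ⟨u, hu⟩ := (hP t).mp ht
    exact ⟨u, by_contra fun hu' => hstable t ht u hu' hu, (hz hu).symm⟩
  obtain ⟨c, hc⟩ := IsIntegrallyClosed.isIntegral_iff.mp
    (isIntegral_of_smul_mem_submodule N hN ((IsNoetherian.noetherian P).map _) z hzN)
  have hbc : a = b * c := IsFractionRing.injective R K <| by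
    rw [map_mul, hc, mul_div_cancel₀ _ hb']
  exact Ideal.IsPrime.ne_top' ((P.eq_top_iff_one).mpr ((hP 1).mpr ⟨c, by rw [one_mul, hbc]⟩))

theorem maximalIdeal_localization_eq_span_of_mul_eq_mul {P : Ideal R} [P.IsPrime] {a b t₀ u : R}
    (ha : a ≠ 0) (hP : ∀ t, t ∈ P ↔ b ∣ t * a) (ht₀ : t₀ ∈ P) (hu : u ∉ P)
    (h : t₀ * a = b * u) :
    maximalIdeal (Localization.AtPrime P) = Ideal.span {algebraMap R _ t₀} := by
  rw [← Localization.AtPrime.map_eq_maximalIdeal]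
  refine le_antisymm (Ideal.map_le_iff_le_comap.mpr fun t ht => ?_) ?_
  · obtain ⟨c, hc⟩ := (hP t).mp ht
    have hut : u * t = c * t₀ := mul_right_cancel₀ ha (by linear_combination u * hc - c * h)
    have hu' := IsLocalization.map_units (Localization.AtPrime P) (⟨u, hu⟩ : P.primeCompl)
    refine Ideal.mem_comap.mpr <| (Ideal.unit_mul_mem_iff_mem _ hu').mp ?_
    rw [← map_mul, hut, map_mul]
    exact Ideal.mul_mem_left _ _ (Ideal.mem_span_singleton_self _)
  · exact (Ideal.span_singleton_le_iff_mem _).mpr (Ideal.mem_map_of_mem _ ht₀)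

theorem Ideal.height_le_one_of_isPrincipal_maximalIdeal_localization [IsNoetherianRing R]
    (P : Ideal R) [P.IsPrime] (h : (maximalIdeal (Localization.AtPrime P)).IsPrincipal) :
    P.height ≤ 1 := by
  have : IsPrincipalIdealRing (Localization.AtPrime P) :=
    ((tfae_of_isNoetherianRing_of_isLocalRing_of_isDomain _).out 0 4).mpr h
  have hdim : ringKrullDim (Localization.AtPrime P) ≤ 1 := Ring.krullDimLE_iff.mp inferInstance
  rw [IsLocalization.AtPrime.ringKrullDim_eq_height P] at hdim
  exact_mod_cast hdim

theorem Ideal.height_eq_one_of_forall_mem_iff_dvd [IsNoetherianRing R] [IsIntegrallyClosed R]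
    {P : Ideal R} [P.IsPrime] {a b : R} (hb : b ≠ 0) (hP : ∀ t, t ∈ P ↔ b ∣ t * a) :
    P.height = 1 := by
  have hbP : b ∈ P := (hP b).mpr (dvd_mul_right b a)
  have ha : a ≠ 0 := by
    rintro rfl
    exact Ideal.IsPrime.ne_top' ((P.eq_top_iff_one).mpr ((hP 1).mpr (by simp)))
  refine le_antisymm ?_ (Order.one_le_iff_ne_zero.mpr fun h0 => hb ?_)
  · obtain ⟨t₀, ht₀, u, hu, h⟩ := exists_mul_eq_mul_notMem_of_forall_mem_iff_dvd hb hP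
    exact P.height_le_one_of_isPrincipal_maximalIdeal_localization
      ⟨_, maximalIdeal_localization_eq_span_of_mul_eq_mul ha hP ht₀ hu h⟩
  · simpa [Ideal.height_eq_zero_iff_eq_bot.mp h0] using hbP

theorem exists_height_eq_one_colon_le_of_not_dvd [IsNoetherianRing R] [IsIntegrallyClosed R]
    {a b : R} (hb : b ≠ 0) (hab : ¬ b ∣ a) :
    ∃ P : Ideal R, P.IsPrime ∧ P.height = 1 ∧ ∀ s, b ∣ s * a → s ∈ P := by
  have hne : Ideal.Quotient.mk (Ideal.span {b}) a ≠ 0 :=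
    mt (Ideal.Quotient.eq_zero_iff_dvd b a).mp hab
  obtain ⟨P, hPass, hle⟩ := exists_le_isAssociatedPrime_of_isNoetherianRing R _ hne
  obtain ⟨hPprime, y, hy⟩ := isAssociatedPrime_iff.mp hPass
  obtain ⟨a', rfl⟩ := Ideal.Quotient.mk_surjective y
  have hP (t : R) : t ∈ P ↔ b ∣ t * a' := by
    rw [hy, Ideal.Quotient.mem_colon_bot_mk_iff_dvd]
  exact ⟨P, hPprime, Ideal.height_eq_one_of_forall_mem_iff_dvd hb hP,
    fun s hs => hle (Ideal.Quotient.mem_colon_bot_mk_iff_dvd.mpr hs)⟩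

end

/-- An integrally closed Noetherian domain is the intersection, inside its fraction field,
of its localizations at the height-one primes: an element of the fraction field lies in `R`
iff at every height-one prime it can be written with denominator outside that prime. -/
theorem stmt_12 (R : Type*) [CommRing R] [IsDomain R] [IsNoetherianRing R]
    [IsIntegrallyClosed R] (x : FractionRing R) :
    x ∈ (algebraMap R (FractionRing R)).range ↔
      ∀ p : PrimeSpectrum R, Order.height p = 1 →
        ∃ a s : R, s ∉ p.asIdeal ∧
          x * algebraMap R (FractionRing R) s = algebraMap R (FractionRing R) a := by
  refine ⟨fun ⟨a, hx⟩ p _ => ⟨a, 1, (Ideal.ne_top_iff_one _).mp p.isPrime.ne_top, ?_⟩,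
    fun H => ?_⟩
  · rw [map_one, mul_one, hx]
  obtain ⟨a, b, hb, rfl⟩ := IsFractionRing.div_surjective R x
  have hb0 : b ≠ 0 := nonZeroDivisors.ne_zero hb
  by_contra hx
  have hab : ¬ b ∣ a := fun h => hx <| by
    simpa [eq_comm] using
      (IsFractionRing.exists_div_mul_eq_iff_dvd (K := FractionRing R) hb0 (s := 1)).mpr (by simpa)
  obtain ⟨P, hP, hP1, hcolon⟩ := exists_height_eq_one_colon_le_of_not_dvd hb0 hab
  obtain ⟨c, s, hs, hxs⟩ := H ⟨P, hP⟩ (by rwa [← PrimeSpectrum.height_eq_orderHeight])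
  exact hs (hcolon s ((IsFractionRing.exists_div_mul_eq_iff_dvd hb0).mp ⟨c, hxs⟩))
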